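/- Fix v_max > 0. Let a_lo1 ≤ a_hi1 and a_lo2 ≤ a_hi2 with a_lo1 ≤ a_lo2 and a_hi1 ≤ a_hi2. Let a1, a2, w1, w2 : [0,∞) → ℝ satisfy, for all t ≥ 0: a1(t) ≤ a2(t), w1(t) ≤ w2(t), a_lo1 + w1(t) ≤ 0, and a_hi2 + w2(t) ≥ 0. Let v1, v2 : [0,∞) → ℝ be differentiable with v1'(t) = Φ(v1(t), a1(t), w1(t); a_lo1, a_hi1) and v2'(t) = Φ(v2(t), a2(t), w2(t); a_lo2, a_hi2) for all t, and v1(0) ≤ v2(0). Then v1(t) ≤ v2(t) for all t ≥ 0. -/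

import Mathlib

/-!
Comparison principle: while `v₁ > v₂`, the ordered inputs, disturbances and limits make the
saturated acceleration of vehicle 1 at most that of vehicle 2. The cut-off cases of `Phi` are
where the braking condition `a_lo₁ + w₁ ≤ 0` and the engine condition `a_hi₂ + w₂ ≥ 0` enter:
they keep the active vehicle's acceleration of the right sign. Hence `v₁ - v₂`, which starts
non-positive, never becomes positive.
-/

/-- The saturated acceleration function of the paper's longitudinal vehicle
model (Eq. (4)) with position-independent acceleration limits `a_lo ≤ a_hi`. -/
noncomputable def Phi (vmax alo ahi v a w : ℝ) : ℝ :=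
  if (v ≤ 0 ∧ a + w ≤ 0) ∨ (vmax ≤ v ∧ 0 ≤ a + w) then 0
  else max alo (min ahi a) + w

open Set

theorem image_le_of_deriv_right_le_deriv_of_lt {f f' : ℝ → ℝ} {a b : ℝ}
    (hf : ContinuousOn f (Icc a b)) (hf' : ∀ x ∈ Ico a b, HasDerivWithinAt f (f' x) (Ici x) x)
    {B B' : ℝ → ℝ} (ha : f a ≤ B a) (hB : ContinuousOn B (Icc a b))
    (hB' : ∀ x ∈ Ico a b, HasDerivWithinAt B (B' x) (Ici x) x)
    (bound : ∀ x ∈ Ico a b, B x < f x → f' x ≤ B' x) : ∀ ⦃x⦄, x ∈ Icc a b → f x ≤ B x := by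
  -- Fence with `B + r * (1 + (x - a))`: on its boundary `f > B`, where the derivatives compare.
  have hfence : ∀ x ∈ Icc a b, ∀ r > 0, f x ≤ B x + r * (1 + (x - a)) := fun x hx r hr => by
    apply image_le_of_deriv_right_lt_deriv_boundary' hf hf'
    · simpa using ha.trans (lt_add_of_pos_right _ hr).le
    · exact hB.add (continuousOn_const.mul (continuousOn_const.add
        (continuousOn_id.sub continuousOn_const)))
    · intro y hy
      exact (hB' y hy).add ((((hasDerivWithinAt_id y (Ici y)).sub_const a).const_add 1).const_mul r)
    · intro y hy hfy
      have hpos : 0 < r * (1 + (y - a)) := mul_pos hr (by linarith [hy.1])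
      rw [mul_one]
      exact (bound y hy (by linarith)).trans_lt (lt_add_of_pos_right _ hr)
    exact hx
  intro x hx
  have : ContinuousWithinAt (fun r => B x + r * (1 + (x - a))) (Ioi 0) 0 := by fun_prop
  convert! continuousWithinAt_const.closure_le _ this (hfence x hx) using 1 <;> simp

lemma max_min_add_nonpos {lo hi a w : ℝ} (hlo : lo + w ≤ 0) (ha : a + w ≤ 0) :
    max lo (min hi a) + w ≤ 0 := by
  have : max lo (min hi a) ≤ max lo a := max_le_max_left lo (min_le_right hi a)
  have : max lo a + w ≤ 0 := by rw [max_add]; exact max_le hlo ha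
  linarith

lemma max_min_add_nonneg {lo hi a w : ℝ} (hhi : 0 ≤ hi + w) (ha : 0 ≤ a + w) :
    0 ≤ max lo (min hi a) + w := by
  have : min hi a ≤ max lo (min hi a) := le_max_right lo (min hi a)
  have : 0 ≤ min hi a + w := by rw [min_add]; exact le_min hhi ha
  linarith

lemma Phi_le_Phi {vmax alo1 ahi1 alo2 ahi2 v1 v2 a1 a2 w1 w2 : ℝ}
    (hlo : alo1 ≤ alo2) (hhi : ahi1 ≤ ahi2) (ha : a1 ≤ a2) (hw : w1 ≤ w2)
    (hbrake : alo1 + w1 ≤ 0) (hengine : 0 ≤ ahi2 + w2) (hv : v2 ≤ v1) :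
    Phi vmax alo1 ahi1 v1 a1 w1 ≤ Phi vmax alo2 ahi2 v2 a2 w2 := by
  have hsum : a1 + w1 ≤ a2 + w2 := add_le_add ha hw
  unfold Phi
  split_ifs with hcut1 hcut2 hcut2
  · exact le_rfl
  · refine max_min_add_nonneg hengine ?_
    push Not at hcut2
    rcases hcut1 with ⟨hv1, -⟩ | ⟨-, hsum1⟩
    · exact (hcut2.1 (hv.trans hv1)).le
    · exact hsum1.trans hsum
  · refine max_min_add_nonpos hbrake ?_
    push Not at hcut1
    rcases hcut2 with ⟨-, hsum2⟩ | ⟨hv2, -⟩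
    · exact hsum.trans hsum2
    · exact (hcut1.2 (hv2.trans hv)).le
  · exact add_le_add (max_le_max hlo (min_le_min hhi ha)) hw

theorem velocity_comparison_general
    (vmax : ℝ)
    (alo1 ahi1 alo2 ahi2 : ℝ)
    (hlo : alo1 ≤ alo2) (hhi : ahi1 ≤ ahi2)
    (a1 a2 w1 w2 : ℝ → ℝ)
    (ha : ∀ t, 0 ≤ t → a1 t ≤ a2 t)
    (hw : ∀ t, 0 ≤ t → w1 t ≤ w2 t)
    (hbrake : ∀ t, 0 ≤ t → alo1 + w1 t ≤ 0)
    (hengine : ∀ t, 0 ≤ t → 0 ≤ ahi2 + w2 t)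
    (v1 v2 : ℝ → ℝ)
    (hv1 : ∀ t, 0 ≤ t → HasDerivAt v1 (Phi vmax alo1 ahi1 (v1 t) (a1 t) (w1 t)) t)
    (hv2 : ∀ t, 0 ≤ t → HasDerivAt v2 (Phi vmax alo2 ahi2 (v2 t) (a2 t) (w2 t)) t)
    (hinit : v1 0 ≤ v2 0) :
    ∀ t, 0 ≤ t → v1 t ≤ v2 t := by
  intro t ht
  refine image_le_of_deriv_right_le_deriv_of_lt (a := 0) (b := t)
    (fun x hx => (hv1 x hx.1).continuousAt.continuousWithinAt)
    (fun x hx => (hv1 x hx.1).hasDerivWithinAt) hinit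
    (fun x hx => (hv2 x hx.1).continuousAt.continuousWithinAt)
    (fun x hx => (hv2 x hx.1).hasDerivWithinAt)
    (fun x hx hlt => ?_) ⟨ht, le_rfl⟩
  exact Phi_le_Phi hlo hhi (ha x hx.1) (hw x hx.1) (hbrake x hx.1) (hengine x hx.1) hlt.le

/-- **Velocity comparison theorem**: pointwise ordered inputs, disturbances
and acceleration limits yield pointwise ordered velocities (instantiation of
the paper's Theorem 1 for position-independent limits). -/
theorem velocity_comparison
    (vmax : ℝ) (hvmax : 0 < vmax)
    (alo1 ahi1 alo2 ahi2 : ℝ)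
    (h1 : alo1 ≤ ahi1) (h2 : alo2 ≤ ahi2)
    (hlo : alo1 ≤ alo2) (hhi : ahi1 ≤ ahi2)
    (a1 a2 w1 w2 : ℝ → ℝ)
    (ha : ∀ t, 0 ≤ t → a1 t ≤ a2 t)
    (hw : ∀ t, 0 ≤ t → w1 t ≤ w2 t)
    (hbrake : ∀ t, 0 ≤ t → alo1 + w1 t ≤ 0)
    (hengine : ∀ t, 0 ≤ t → 0 ≤ ahi2 + w2 t)
    (v1 v2 : ℝ → ℝ)
    (hv1 : ∀ t, 0 ≤ t → HasDerivAt v1 (Phi vmax alo1 ahi1 (v1 t) (a1 t) (w1 t)) t)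
    (hv2 : ∀ t, 0 ≤ t → HasDerivAt v2 (Phi vmax alo2 ahi2 (v2 t) (a2 t) (w2 t)) t)
    (hinit : v1 0 ≤ v2 0) :
    ∀ t, 0 ≤ t → v1 t ≤ v2 t :=
  velocity_comparison_general vmax alo1 ahi1 alo2 ahi2 hlo hhi a1 a2 w1 w2 ha hw hbrake hengine v1
    v2 hv1 hv2 hinit
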